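/- For a pair of matrix weights U, V and 1 < p < ∞, the two-weight matrix A_p characteristic [U,V]_{A_p} is comparable (with constants depending only on n and p) to sup over cubes I of ‖𝒰_I 𝒱'_I‖^p, where 𝒰_I and 𝒱'_I are reducing matrices satisfying |𝒰_I e| ≈ (⨍_I |U^{1/p}(x)e|^p dx)^{1/p} and |𝒱'_I e| ≈ (⨍_I |V^{-1/p}(y)e|^{p'} dy)^{1/p'}. -/

import Mathlib

open MeasureTheory
open scoped ENNReal NNReal BigOperators ComplexOrder

noncomputable section

namespace Paper

/-- A dyadic cube in `ℝ^d`, encoded by its scale `k` (sidelength `2^k`) and position `m`. -/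
structure DCube (d : ℕ) where
  k : ℤ
  m : Fin d → ℤ
deriving DecidableEq

/-- The underlying set of a dyadic cube. -/
def DCube.set {d : ℕ} (Q : DCube d) : Set (Fin d → ℝ) :=
  {x | ∀ i, (Q.m i : ℝ) * 2 ^ Q.k ≤ x i ∧ x i < ((Q.m i : ℝ) + 1) * 2 ^ Q.k}

/-- An axis-parallel (half-open) cube in `ℝ^d`. -/
def IsCube (d : ℕ) (Q : Set (Fin d → ℝ)) : Prop :=
  ∃ (a : Fin d → ℝ) (h : ℝ), 0 < h ∧ Q = {x | ∀ i, a i ≤ x i ∧ x i < a i + h}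

/-- Matrix acting on Euclidean space. -/
def mvec {n : ℕ} (A : Matrix (Fin n) (Fin n) ℂ) (v : EuclideanSpace ℂ (Fin n)) :
    EuclideanSpace ℂ (Fin n) :=
  (WithLp.equiv 2 (Fin n → ℂ)).symm (A.mulVec ((WithLp.equiv 2 (Fin n → ℂ)) v))

/-- Operator norm (`ℓ² → ℓ²`) of a matrix. -/
def opNorm {n : ℕ} (A : Matrix (Fin n) (Fin n) ℂ) : ℝ :=
  ‖LinearMap.toContinuousLinearMap (Matrix.toEuclideanLin A)‖

/-- A Haar system adapted to the standard dyadic grid: supported on `Q`, mean zero,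
orthonormal in `L²`, and constant on strict dyadic subcubes. -/
def IsHaarSystem (d : ℕ) (h : DCube d → Fin (2 ^ d - 1) → (Fin d → ℝ) → ℝ) : Prop :=
  (∀ Q j x, x ∉ Q.set → h Q j x = 0) ∧
  (∀ Q j, ∫ x in Q.set, h Q j x = 0) ∧
  (∀ Q j Q' j', ∫ x, h Q j x * h Q' j' x = if Q = Q' ∧ j = j' then 1 else 0) ∧
  (∀ Q j (Q' : DCube d), Q'.set ⊂ Q.set → ∃ c : ℝ, ∀ x ∈ Q'.set, h Q j x = c)

/-- Haar coefficient of a vector-valued function. -/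
def haarCoef {d n : ℕ} (h : DCube d → Fin (2 ^ d - 1) → (Fin d → ℝ) → ℝ)
    (f : (Fin d → ℝ) → EuclideanSpace ℂ (Fin n)) (Q : DCube d) (j : Fin (2 ^ d - 1)) :
    EuclideanSpace ℂ (Fin n) :=
  ∫ x in Q.set, ((h Q j x : ℂ) • f x)

/-- Haar coefficient of a scalar function. -/
def haarCoefR {d : ℕ} (h : DCube d → Fin (2 ^ d - 1) → (Fin d → ℝ) → ℝ)
    (f : (Fin d → ℝ) → ℝ) (Q : DCube d) (j : Fin (2 ^ d - 1)) : ℝ :=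
  ∫ x in Q.set, f x * h Q j x

/-- Lebesgue measure of a dyadic cube, as a real number. -/
def vol {d : ℕ} (Q : DCube d) : ℝ := (volume Q.set).toReal

/-- `M` is a reducing matrix for the weight with `p`-th root `W` on the set `I`,
with comparison constants `c, C`. -/
def IsReducingFor {d n : ℕ} (p : ℝ) (W : (Fin d → ℝ) → Matrix (Fin n) (Fin n) ℂ)
    (I : Set (Fin d → ℝ)) (M : Matrix (Fin n) (Fin n) ℂ) (c C : ℝ) : Prop :=
  M.PosDef ∧ ∀ v : EuclideanSpace ℂ (Fin n),
    c * (⨍ x in I, ‖mvec (W x) v‖ ^ p) ^ (1 / p) ≤ ‖mvec M v‖ ∧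
    ‖mvec M v‖ ≤ C * (⨍ x in I, ‖mvec (W x) v‖ ^ p) ^ (1 / p)

/-- A matrix weight, recorded via its `p`-th root `W = U^{1/p}`: entrywise measurable and
a.e. positive definite. -/
def IsMatrixWeight {d n : ℕ} (W : (Fin d → ℝ) → Matrix (Fin n) (Fin n) ℂ) : Prop :=
  (∀ i j, Measurable fun x => W x i j) ∧
  ∀ᵐ x ∂(volume : Measure (Fin d → ℝ)), (W x).PosDef

/-- Two-weight matrix `A_p` characteristic `[U,V]_{A_p}`, expressed in terms of
`W = U^{1/p}` and `Z = V^{-1/p}`.  (Note `p/p' = p - 1`.) -/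
def ApChar (d n : ℕ) (p : ℝ) (W Z : (Fin d → ℝ) → Matrix (Fin n) (Fin n) ℂ) : ℝ≥0∞ :=
  ⨆ I : {Q : Set (Fin d → ℝ) // IsCube d Q},
    ENNReal.ofReal (⨍ x in I.1, (⨍ y in I.1, opNorm (Z y * W x) ^ (p / (p - 1))) ^ (p - 1))

/-- Dyadic/cube maximal function (over all axis-parallel cubes containing `x`). -/
def maximal (d : ℕ) (w : (Fin d → ℝ) → ℝ≥0∞) (x : Fin d → ℝ) : ℝ≥0∞ :=
  ⨆ I : {Q : Set (Fin d → ℝ) // IsCube d Q ∧ x ∈ Q}, (volume I.1)⁻¹ * ∫⁻ y in I.1, w y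

/-- Fujii–Wilson `A_∞` characteristic of a scalar weight. -/
def AinfChar (d : ℕ) (w : (Fin d → ℝ) → ℝ≥0∞) : ℝ≥0∞ :=
  ⨆ I : {Q : Set (Fin d → ℝ) // IsCube d Q},
    (∫⁻ x in I.1, maximal d (I.1.indicator w) x) / ∫⁻ x in I.1, w x

/-- Matrix `A_p^wk` characteristic of the weight with `p`-th root `W`:
`sup_e [ |W e|^p ]_{A_∞}`. -/
def ApWkChar (d n : ℕ) (p : ℝ) (W : (Fin d → ℝ) → Matrix (Fin n) (Fin n) ℂ) : ℝ≥0∞ :=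
  ⨆ v : EuclideanSpace ℂ (Fin n),
    AinfChar d (fun x => ENNReal.ofReal (‖mvec (W x) v‖ ^ p))

/-- A sparse collection of dyadic cubes. -/
def IsSparse {d : ℕ} (𝓛 : Set (DCube d)) : Prop :=
  ∀ J ∈ 𝓛, volume (⋃ Q ∈ {Q ∈ 𝓛 | Q.set ⊂ J.set}, DCube.set Q) ≤ volume J.set / 2

/-- Matrix-weighted `L^p` norm, with `Vr = V^{1/p}`. -/
def wNorm (d n : ℕ) (p : ℝ) (Vr : (Fin d → ℝ) → Matrix (Fin n) (Fin n) ℂ)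
    (f : (Fin d → ℝ) → EuclideanSpace ℂ (Fin n)) : ℝ :=
  (∫ x, ‖mvec (Vr x) (f x)‖ ^ p) ^ (1 / p)

/-- Unweighted `L^p` norm of a scalar function. -/
def lpNorm (d : ℕ) (p : ℝ) (g : (Fin d → ℝ) → ℝ) : ℝ :=
  (∫ x, |g x| ^ p) ^ (1 / p)



open scoped Matrix.Norms.L2Operator Matrix

section Aux
variable {n : ℕ} (A B : Matrix (Fin n) (Fin n) ℂ)


lemma opNorm_eq : opNorm A = ‖A‖ := rfl

lemma mvec_eq (v : EuclideanSpace ℂ (Fin n)) : mvec A v = Matrix.toEuclideanLin A v := rfl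

lemma opNorm_nonneg : 0 ≤ opNorm A := norm_nonneg _

lemma mvec_norm_le (v : EuclideanSpace ℂ (Fin n)) : ‖mvec A v‖ ≤ opNorm A * ‖v‖ :=
  (LinearMap.toContinuousLinearMap (Matrix.toEuclideanLin A)).le_opNorm v

lemma opNorm_le_bound {C : ℝ} (hC : 0 ≤ C) (h : ∀ v, ‖mvec A v‖ ≤ C * ‖v‖) : opNorm A ≤ C :=
  ContinuousLinearMap.opNorm_le_bound _ hC h

lemma mvec_mul (v : EuclideanSpace ℂ (Fin n)) : mvec (A * B) v = mvec A (mvec B v) := by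
  simp [mvec, Matrix.mulVec_mulVec]

lemma opNorm_conjTranspose : opNorm Aᴴ = opNorm A := Matrix.l2_opNorm_conjTranspose A

lemma mvec_eq_zero {v : EuclideanSpace ℂ (Fin n)} (hA : A.PosDef) (h : mvec A v = 0) : v = 0 := by
  have h2 : A.mulVec (WithLp.equiv 2 (Fin n → ℂ) v) = 0 := by
    have := congrArg (WithLp.equiv 2 (Fin n → ℂ)) h
    simpa [mvec] using this
  by_contra hv
  have hv' : (WithLp.equiv 2 (Fin n → ℂ)) v ≠ 0 := by
    simpa using hv
  have := hA.dotProduct_mulVec_pos hv'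
  rw [h2] at this
  simp at this

variable {n : ℕ} (A B : Matrix (Fin n) (Fin n) ℂ)

lemma coord_le_norm (v : EuclideanSpace ℂ (Fin n)) (i : Fin n) : ‖v i‖ ≤ ‖v‖ := by
  rw [EuclideanSpace.norm_eq]
  have h1 : ‖v i‖ = Real.sqrt (‖v i‖ ^ 2) := by
    rw [Real.sqrt_sq (norm_nonneg _)]
  rw [h1]
  apply Real.sqrt_le_sqrt
  exact Finset.single_le_sum (f := fun j => ‖v j‖ ^ 2) (fun j _ => sq_nonneg _) (Finset.mem_univ i)

lemma opNorm_le_sum : opNorm A ≤ ∑ i, ‖mvec A (EuclideanSpace.single i 1)‖ := by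
  apply opNorm_le_bound _ (Finset.sum_nonneg fun i _ => norm_nonneg _)
  intro v
  have hv : ∑ i, ((EuclideanSpace.basisFun (Fin n) ℂ).repr v i) •
      (EuclideanSpace.basisFun (Fin n) ℂ) i = v :=
    (EuclideanSpace.basisFun (Fin n) ℂ).sum_repr v
  calc ‖mvec A v‖ = ‖Matrix.toEuclideanLin A v‖ := rfl
    _ = ‖∑ i, ((EuclideanSpace.basisFun (Fin n) ℂ).repr v i) •
          Matrix.toEuclideanLin A ((EuclideanSpace.basisFun (Fin n) ℂ) i)‖ := by
        conv_lhs => rw [← hv]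
        simp only [map_sum, _root_.map_smul]
    _ ≤ ∑ i, ‖((EuclideanSpace.basisFun (Fin n) ℂ).repr v i) •
          Matrix.toEuclideanLin A ((EuclideanSpace.basisFun (Fin n) ℂ) i)‖ :=
        norm_sum_le _ _
    _ ≤ ∑ i, ‖v‖ * ‖mvec A (EuclideanSpace.single i 1)‖ := by
        apply Finset.sum_le_sum
        intro i _
        rw [norm_smul]
        have hrepr : ‖(EuclideanSpace.basisFun (Fin n) ℂ).repr v i‖ = ‖v i‖ := by
          simp [EuclideanSpace.basisFun]
        have h2 : ‖Matrix.toEuclideanLin A ((EuclideanSpace.basisFun (Fin n) ℂ) i)‖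
            = ‖mvec A (EuclideanSpace.single i 1)‖ := by
          rw [EuclideanSpace.basisFun_apply]; rfl
        rw [hrepr, h2]
        exact mul_le_mul_of_nonneg_right (coord_le_norm v i) (norm_nonneg _)
    _ = (∑ i, ‖mvec A (EuclideanSpace.single i 1)‖) * ‖v‖ := by
        rw [← Finset.mul_sum, mul_comm]

lemma opNorm_rpow_le {q : ℝ} (hq : 0 < q) :
    opNorm A ^ q ≤ ((n : ℝ) + 1) ^ q * ∑ i, ‖mvec A (EuclideanSpace.single i 1)‖ ^ q := by
  set S := ∑ i, ‖mvec A (EuclideanSpace.single i 1)‖ ^ q with hS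
  have hS0 : 0 ≤ S := Finset.sum_nonneg fun i _ =>
    Real.rpow_nonneg (norm_nonneg _) _
  have hstep : opNorm A ≤ ((n : ℝ) + 1) * S ^ q⁻¹ := by
    refine (opNorm_le_sum A).trans ?_
    have h1 : ∀ i : Fin n, ‖mvec A (EuclideanSpace.single i 1)‖ ≤ S ^ q⁻¹ := by
      intro i
      have h2 : ‖mvec A (EuclideanSpace.single i 1)‖ ^ q ≤ S :=
        Finset.single_le_sum (f := fun j => ‖mvec A (EuclideanSpace.single j 1)‖ ^ q)
          (fun j _ => Real.rpow_nonneg (norm_nonneg _) _) (Finset.mem_univ i)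
      calc ‖mvec A (EuclideanSpace.single i 1)‖
          = (‖mvec A (EuclideanSpace.single i 1)‖ ^ q) ^ q⁻¹ := by
            rw [Real.rpow_rpow_inv (norm_nonneg _) hq.ne']
        _ ≤ S ^ q⁻¹ := Real.rpow_le_rpow (Real.rpow_nonneg (norm_nonneg _) _) h2 (by positivity)
    calc (∑ i, ‖mvec A (EuclideanSpace.single i 1)‖) ≤ ∑ _i : Fin n, S ^ q⁻¹ :=
          Finset.sum_le_sum fun i _ => h1 i
      _ = (n : ℝ) * S ^ q⁻¹ := by simp [mul_comm]
      _ ≤ ((n : ℝ) + 1) * S ^ q⁻¹ := by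
          have : (0:ℝ) ≤ S ^ q⁻¹ := Real.rpow_nonneg hS0 _
          nlinarith
  calc opNorm A ^ q ≤ (((n : ℝ) + 1) * S ^ q⁻¹) ^ q :=
        Real.rpow_le_rpow (opNorm_nonneg A) hstep hq.le
    _ = ((n : ℝ) + 1) ^ q * (S ^ q⁻¹) ^ q := Real.mul_rpow (by positivity) (Real.rpow_nonneg hS0 _)
    _ = ((n : ℝ) + 1) ^ q * S := by rw [Real.rpow_inv_rpow hS0 hq.ne']

variable {n : ℕ}

lemma opNorm_swap {A B : Matrix (Fin n) (Fin n) ℂ} (hA : A.IsHermitian) (hB : B.IsHermitian) :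
    opNorm (A * B) = opNorm (B * A) := by
  rw [← opNorm_conjTranspose (A * B), Matrix.conjTranspose_mul, hA.eq, hB.eq]

lemma continuous_opNorm : Continuous (opNorm (n := n)) := by
  have h : Continuous fun A : Matrix (Fin n) (Fin n) ℂ =>
      LinearMap.toContinuousLinearMap (Matrix.toEuclideanLin A) :=
    LinearMap.continuous_of_finiteDimensional
      ((Matrix.toEuclideanLin.trans LinearMap.toContinuousLinearMap :
        Matrix (Fin n) (Fin n) ℂ ≃ₗ[ℂ] _).toLinearMap)
  exact continuous_norm.comp h

lemma continuous_mvec (v : EuclideanSpace ℂ (Fin n)) :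
    Continuous fun A : Matrix (Fin n) (Fin n) ℂ => mvec A v := by
  have : (fun A : Matrix (Fin n) (Fin n) ℂ => mvec A v) =
      fun A => ((LinearMap.applyₗ v).comp
        (Matrix.toEuclideanLin (𝕜 := ℂ) (m := Fin n) (n := Fin n)).toLinearMap) A := rfl
  rw [this]
  exact LinearMap.continuous_of_finiteDimensional _

variable {d : ℕ}

lemma measurable_comp {α : Type*} [MeasurableSpace α] {W : α → Matrix (Fin n) (Fin n) ℂ}
    (hW : ∀ i j, Measurable fun x => W x i j) {E : Type*} [TopologicalSpace E]
    [MeasurableSpace E] [BorelSpace E] {g : Matrix (Fin n) (Fin n) ℂ → E} (hg : Continuous g) :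
    Measurable fun x => g (W x) := by
  have h1 : Measurable fun x => (fun i j => W x i j : Fin n → Fin n → ℂ) :=
    measurable_pi_lambda _ fun i => measurable_pi_lambda _ fun j => hW i j
  have hg' : Continuous fun m : Fin n → Fin n → ℂ => g (Matrix.of m) := hg
  exact hg'.measurable.comp h1

lemma cube_meas {Q : Set (Fin d → ℝ)} (hQ : IsCube d Q) :
    MeasurableSet Q ∧ 0 < volume Q ∧ volume Q < ⊤ := by
  obtain ⟨a, h, hh, rfl⟩ := hQ
  have hset : {x : Fin d → ℝ | ∀ i, a i ≤ x i ∧ x i < a i + h} =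
      Set.pi Set.univ fun i => Set.Ico (a i) (a i + h) := by
    ext x; simp [Set.mem_pi, Set.mem_Ico]
  rw [hset]
  refine ⟨MeasurableSet.univ_pi fun i => measurableSet_Ico, ?_, ?_⟩
  · rw [MeasureTheory.volume_pi_pi]
    rw [Finset.prod_eq_pow_card (b := ENNReal.ofReal h)]
    · exact ENNReal.pow_pos (by simpa using hh) _
    · intro i _; rw [Real.volume_Ico]; congr 1; ring
  · rw [MeasureTheory.volume_pi_pi]
    refine ENNReal.prod_lt_top fun i _ => ?_
    rw [Real.volume_Ico]
    exact ENNReal.ofReal_lt_top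

variable {n d : ℕ}

lemma rpow_le_of_le_rpow {q cc a b : ℝ} (hq : 0 < q) (hcc : 0 < cc) (ha : 0 ≤ a)
    (h : cc * a ^ (1 / q) ≤ b) : a ≤ cc⁻¹ ^ q * b ^ q := by
  have hb : 0 ≤ b := le_trans (by positivity) h
  have h1 : a ^ (1 / q) ≤ cc⁻¹ * b := by
    rw [inv_mul_eq_div, le_div_iff₀ hcc, mul_comm]; exact h
  calc a = (a ^ (1 / q)) ^ q := by
        rw [one_div, Real.rpow_inv_rpow ha hq.ne']
    _ ≤ (cc⁻¹ * b) ^ q := Real.rpow_le_rpow (Real.rpow_nonneg ha _) h1 hq.le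
    _ = cc⁻¹ ^ q * b ^ q := Real.mul_rpow (by positivity) hb

lemma le_rpow_of_rpow_le {q cc a b : ℝ} (hq : 0 < q) (hcc : 0 ≤ cc) (ha : 0 ≤ a) (hb : 0 ≤ b)
    (h : b ≤ cc * a ^ (1 / q)) : b ^ q ≤ cc ^ q * a := by
  calc b ^ q ≤ (cc * a ^ (1 / q)) ^ q :=
        Real.rpow_le_rpow hb h hq.le
    _ = cc ^ q * (a ^ (1 / q)) ^ q := Real.mul_rpow hcc (Real.rpow_nonneg ha _)
    _ = cc ^ q * a := by rw [one_div, Real.rpow_inv_rpow ha hq.ne']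

lemma measurable_normPow {W : (Fin d → ℝ) → Matrix (Fin n) (Fin n) ℂ}
    (hWm : ∀ i j, Measurable fun x => W x i j) (v : EuclideanSpace ℂ (Fin n)) {q : ℝ}
    (hq : 0 ≤ q) : Measurable fun x => ‖mvec (W x) v‖ ^ q :=
  measurable_comp hWm ((Real.continuous_rpow_const hq).comp
    (continuous_norm.comp (continuous_mvec v)))

lemma reducing_integrableOn {q c₀ C₀ : ℝ} (hq : 0 < q) (hc₀ : 0 < c₀)
    {W : (Fin d → ℝ) → Matrix (Fin n) (Fin n) ℂ} (hWm : ∀ i j, Measurable fun x => W x i j)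
    {I : Set (Fin d → ℝ)} {M : Matrix (Fin n) (Fin n) ℂ}
    (hM : IsReducingFor q W I M c₀ C₀) (v : EuclideanSpace ℂ (Fin n)) :
    IntegrableOn (fun x => ‖mvec (W x) v‖ ^ q) I := by
  by_contra hni
  have h0 : ∫ x in I, ‖mvec (W x) v‖ ^ q = 0 := integral_undef hni
  have havg : ⨍ x in I, ‖mvec (W x) v‖ ^ q = 0 := by
    rw [setAverage_eq, h0, smul_zero]
  have h2 := (hM.2 v).2
  rw [havg, Real.zero_rpow (by positivity : (1:ℝ)/q ≠ 0), mul_zero] at h2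
  have h3 : mvec M v = 0 := by
    rwa [← norm_le_zero_iff]
  have h4 : v = 0 := mvec_eq_zero M hM.1 h3
  apply hni
  have : (fun x => ‖mvec (W x) v‖ ^ q) = fun _ => (0:ℝ) := by
    funext x
    rw [h4]
    have : mvec (W x) 0 = 0 := by simp [mvec]
    rw [this, norm_zero, Real.zero_rpow hq.ne']
  rw [this]
  exact integrableOn_zero

variable {n d : ℕ}

lemma core {q c₀ C₀ : ℝ} (hq : 0 < q) (hc₀ : 0 < c₀) (hC₀ : 0 < C₀)
    {Z : (Fin d → ℝ) → Matrix (Fin n) (Fin n) ℂ} (hZm : ∀ i j, Measurable fun x => Z x i j)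
    {I : Set (Fin d → ℝ)} (hI : IsCube d I) {M : Matrix (Fin n) (Fin n) ℂ}
    (hM : IsReducingFor q Z I M c₀ C₀) (A : Matrix (Fin n) (Fin n) ℂ) :
    IntegrableOn (fun y => opNorm (Z y * A) ^ q) I ∧
    ⨍ y in I, opNorm (Z y * A) ^ q ≤ (((n:ℝ)+1) ^ (q+1) * (c₀⁻¹) ^ q) * opNorm (M * A) ^ q ∧
    opNorm (M * A) ^ q ≤ C₀ ^ q * ⨍ y in I, opNorm (Z y * A) ^ q := by
  obtain ⟨hQm, hQ0, hQt⟩ := cube_meas hI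
  have hvol : (0:ℝ) < (volume I).toReal := ENNReal.toReal_pos hQ0.ne' hQt.ne
  set κ := ((volume I).toReal)⁻¹ with hκdef
  have hκ : 0 ≤ κ := inv_nonneg.2 hvol.le
  have havg : ∀ f : (Fin d → ℝ) → ℝ, ⨍ y in I, f y = κ * ∫ y in I, f y := fun f => by
    rw [setAverage_eq, smul_eq_mul]; rfl
  set e : Fin n → EuclideanSpace ℂ (Fin n) := fun i => EuclideanSpace.single i (1:ℂ) with he
  set u : Fin n → EuclideanSpace ℂ (Fin n) := fun i => mvec A (e i) with hu
  have hnorme : ∀ i, ‖e i‖ = 1 := fun i => by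
    rw [he]; rw [EuclideanSpace.norm_single]; norm_num
  have hint_i : ∀ v, IntegrableOn (fun y => ‖mvec (Z y) v‖ ^ q) I := fun v =>
    reducing_integrableOn hq hc₀ hZm hM v
  have hdom : ∀ y, opNorm (Z y * A) ^ q ≤ ((n:ℝ)+1) ^ q * ∑ i, ‖mvec (Z y) (u i)‖ ^ q := by
    intro y
    have h1 := opNorm_rpow_le (Z y * A) hq
    simp only [mvec_mul] at h1
    exact h1
  have hZAm : Measurable fun y => opNorm (Z y * A) ^ q := by
    have hAm : ∀ i j, Measurable fun y => (Z y * A) i j := by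
      intro i j
      simp only [Matrix.mul_apply]
      exact Finset.measurable_sum _ fun k _ => (hZm i k).mul measurable_const
    exact measurable_comp hAm ((Real.continuous_rpow_const hq.le).comp continuous_opNorm)
  have hsumInt : IntegrableOn (fun y => ((n:ℝ)+1) ^ q * ∑ i, ‖mvec (Z y) (u i)‖ ^ q) I :=
    (integrable_finset_sum _ fun i _ => hint_i (u i)).const_mul _
  have hint : IntegrableOn (fun y => opNorm (Z y * A) ^ q) I := by
    refine hsumInt.mono' hZAm.aestronglyMeasurable (ae_of_all _ fun y => ?_)
    rw [Real.norm_eq_abs, abs_of_nonneg (Real.rpow_nonneg (opNorm_nonneg _) _)]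
    exact hdom y
  have hF0 : 0 ≤ ⨍ y in I, opNorm (Z y * A) ^ q := by
    rw [havg]
    exact mul_nonneg hκ (setIntegral_nonneg hQm fun y _ => Real.rpow_nonneg (opNorm_nonneg _) _)
  refine ⟨hint, ?_, ?_⟩
  · -- upper bound
    have step1 : ⨍ y in I, opNorm (Z y * A) ^ q ≤
        ⨍ y in I, ((n:ℝ)+1) ^ q * ∑ i, ‖mvec (Z y) (u i)‖ ^ q := by
      rw [havg, havg]
      exact mul_le_mul_of_nonneg_left
        (integral_mono_ae hint hsumInt (ae_of_all _ hdom)) hκ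
    have step2 : ⨍ y in I, ((n:ℝ)+1) ^ q * ∑ i, ‖mvec (Z y) (u i)‖ ^ q =
        ((n:ℝ)+1) ^ q * ∑ i, ⨍ y in I, ‖mvec (Z y) (u i)‖ ^ q := by
      rw [havg, integral_const_mul, integral_finset_sum _ fun i _ => hint_i (u i)]
      simp only [Finset.mul_sum]
      exact Finset.sum_congr rfl fun i _ => by rw [havg]; ring
    have step3 : ∀ i : Fin n, ⨍ y in I, ‖mvec (Z y) (u i)‖ ^ q ≤
        (c₀⁻¹) ^ q * opNorm (M * A) ^ q := by
      intro i
      have h1 := (hM.2 (u i)).1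
      have h2 : ⨍ y in I, ‖mvec (Z y) (u i)‖ ^ q ≤ (c₀⁻¹) ^ q * ‖mvec M (u i)‖ ^ q := by
        have h0 : 0 ≤ ⨍ y in I, ‖mvec (Z y) (u i)‖ ^ q := by
          rw [havg]
          exact mul_nonneg hκ (setIntegral_nonneg hQm fun y _ => Real.rpow_nonneg (norm_nonneg _) _)
        exact rpow_le_of_le_rpow hq hc₀ h0 h1
      refine h2.trans ?_
      have h3 : ‖mvec M (u i)‖ ≤ opNorm (M * A) := by
        have h4 : ‖mvec (M * A) (e i)‖ ≤ opNorm (M * A) * ‖e i‖ := mvec_norm_le _ _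
        rw [hnorme i, mul_one] at h4
        rw [hu]
        simpa [mvec_mul] using h4
      exact mul_le_mul_of_nonneg_left
        (Real.rpow_le_rpow (norm_nonneg _) h3 hq.le) (by positivity)
    calc ⨍ y in I, opNorm (Z y * A) ^ q
        ≤ ((n:ℝ)+1) ^ q * ∑ i, ⨍ y in I, ‖mvec (Z y) (u i)‖ ^ q := step1.trans step2.le
      _ ≤ ((n:ℝ)+1) ^ q * ∑ _i : Fin n, (c₀⁻¹) ^ q * opNorm (M * A) ^ q :=
          mul_le_mul_of_nonneg_left (Finset.sum_le_sum fun i _ => step3 i) (by positivity)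
      _ = ((n:ℝ)+1) ^ q * ((n : ℝ) * ((c₀⁻¹) ^ q * opNorm (M * A) ^ q)) := by
          rw [Finset.sum_const, Finset.card_univ, Fintype.card_fin, nsmul_eq_mul]
      _ ≤ ((n:ℝ)+1) ^ q * (((n : ℝ) + 1) * ((c₀⁻¹) ^ q * opNorm (M * A) ^ q)) := by
          have hnn : (0:ℝ) ≤ (c₀⁻¹) ^ q * opNorm (M * A) ^ q := by
            apply mul_nonneg (Real.rpow_nonneg (by positivity) _)
              (Real.rpow_nonneg (opNorm_nonneg _) _)
          have : ((n:ℝ)) * ((c₀⁻¹) ^ q * opNorm (M * A) ^ q) ≤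
              ((n : ℝ) + 1) * ((c₀⁻¹) ^ q * opNorm (M * A) ^ q) := by nlinarith
          exact mul_le_mul_of_nonneg_left this (Real.rpow_nonneg (by positivity) _)
      _ = (((n:ℝ)+1) ^ (q+1) * (c₀⁻¹) ^ q) * opNorm (M * A) ^ q := by
          rw [Real.rpow_add_one (by positivity : ((n:ℝ)+1) ≠ 0)]
          ring
  · -- lower bound
    have key : opNorm (M * A) ≤ C₀ * (⨍ y in I, opNorm (Z y * A) ^ q) ^ (1/q) := by
      apply opNorm_le_bound _ (by positivity)
      intro v
      have h1 : ‖mvec (M * A) v‖ = ‖mvec M (mvec A v)‖ := by rw [mvec_mul]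
      have h2 := (hM.2 (mvec A v)).2
      have h3 : ⨍ y in I, ‖mvec (Z y) (mvec A v)‖ ^ q ≤
          (⨍ y in I, opNorm (Z y * A) ^ q) * ‖v‖ ^ q := by
        have hpt : ∀ y, ‖mvec (Z y) (mvec A v)‖ ^ q ≤ opNorm (Z y * A) ^ q * ‖v‖ ^ q := by
          intro y
          have h5 : ‖mvec (Z y) (mvec A v)‖ ≤ opNorm (Z y * A) * ‖v‖ := by
            rw [← mvec_mul]
            exact mvec_norm_le _ _
          calc ‖mvec (Z y) (mvec A v)‖ ^ q ≤ (opNorm (Z y * A) * ‖v‖) ^ q :=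
                Real.rpow_le_rpow (norm_nonneg _) h5 hq.le
            _ = opNorm (Z y * A) ^ q * ‖v‖ ^ q :=
                Real.mul_rpow (opNorm_nonneg _) (norm_nonneg _)
        rw [havg, havg, mul_assoc, ← integral_mul_const]
        exact mul_le_mul_of_nonneg_left
          (integral_mono_ae (hint_i (mvec A v)) (hint.mul_const _) (ae_of_all _ hpt)) hκ
      have h4 : (⨍ y in I, ‖mvec (Z y) (mvec A v)‖ ^ q) ^ (1/q) ≤
          (⨍ y in I, opNorm (Z y * A) ^ q) ^ (1/q) * ‖v‖ := by
        have h0 : 0 ≤ ⨍ y in I, ‖mvec (Z y) (mvec A v)‖ ^ q := by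
          rw [havg]
          exact mul_nonneg hκ (setIntegral_nonneg hQm fun y _ => Real.rpow_nonneg (norm_nonneg _) _)
        calc (⨍ y in I, ‖mvec (Z y) (mvec A v)‖ ^ q) ^ (1/q)
            ≤ ((⨍ y in I, opNorm (Z y * A) ^ q) * ‖v‖ ^ q) ^ (1/q) :=
              Real.rpow_le_rpow h0 h3 (by positivity)
          _ = (⨍ y in I, opNorm (Z y * A) ^ q) ^ (1/q) * (‖v‖ ^ q) ^ (1/q) :=
              Real.mul_rpow hF0 (Real.rpow_nonneg (norm_nonneg _) _)
          _ = (⨍ y in I, opNorm (Z y * A) ^ q) ^ (1/q) * ‖v‖ := by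
              rw [one_div, Real.rpow_rpow_inv (norm_nonneg _) hq.ne']
      calc ‖mvec (M * A) v‖ = ‖mvec M (mvec A v)‖ := h1
        _ ≤ C₀ * (⨍ y in I, ‖mvec (Z y) (mvec A v)‖ ^ q) ^ (1/q) := h2
        _ ≤ C₀ * ((⨍ y in I, opNorm (Z y * A) ^ q) ^ (1/q) * ‖v‖) :=
            mul_le_mul_of_nonneg_left h4 hC₀.le
        _ = C₀ * (⨍ y in I, opNorm (Z y * A) ^ q) ^ (1/q) * ‖v‖ := by ring
    exact le_rpow_of_rpow_le hq hC₀.le hF0 (opNorm_nonneg _) key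

variable {n d : ℕ}

lemma percube {p c₀ C₀ : ℝ} (hp : 1 < p) (hc₀ : 0 < c₀) (hC₀ : 0 < C₀)
    {W Z : (Fin d → ℝ) → Matrix (Fin n) (Fin n) ℂ}
    (hWm : ∀ i j, Measurable fun x => W x i j) (hZm : ∀ i j, Measurable fun x => Z x i j)
    (hWpd : ∀ᵐ x ∂(volume : Measure (Fin d → ℝ)), (W x).PosDef)
    {I : Set (Fin d → ℝ)} (hI : IsCube d I) {MU MV : Matrix (Fin n) (Fin n) ℂ}
    (hMU : IsReducingFor p W I MU c₀ C₀) (hMV : IsReducingFor (p/(p-1)) Z I MV c₀ C₀) :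
    opNorm (MU * MV) ^ p ≤
      (C₀ ^ p * C₀ ^ p) * ⨍ x in I, (⨍ y in I, opNorm (Z y * W x) ^ (p/(p-1))) ^ (p-1) ∧
    ⨍ x in I, (⨍ y in I, opNorm (Z y * W x) ^ (p/(p-1))) ^ (p-1) ≤
      ((((n:ℝ)+1) ^ (p/(p-1)+1) * (c₀⁻¹) ^ (p/(p-1))) ^ (p-1) *
        (((n:ℝ)+1) ^ (p+1) * (c₀⁻¹) ^ p)) * opNorm (MU * MV) ^ p := by
  have hp1 : (0:ℝ) < p - 1 := by linarith
  have hp0 : (0:ℝ) < p := by linarith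
  set p' := p / (p - 1) with hp'def
  have hp' : 0 < p' := div_pos hp0 hp1
  have hp'p : p' * (p - 1) = p := div_mul_cancel₀ _ hp1.ne'
  obtain ⟨hQm, hQ0, hQt⟩ := cube_meas hI
  have hvol : (0:ℝ) < (volume I).toReal := ENNReal.toReal_pos hQ0.ne' hQt.ne
  set κ := ((volume I).toReal)⁻¹ with hκdef
  have hκ : 0 ≤ κ := inv_nonneg.2 hvol.le
  have havg : ∀ f : (Fin d → ℝ) → ℝ, ⨍ y in I, f y = κ * ∫ y in I, f y := fun f => by
    rw [setAverage_eq, smul_eq_mul]; rfl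
  set F : (Fin d → ℝ) → ℝ := fun x => ⨍ y in I, opNorm (Z y * W x) ^ p' with hFdef
  set KA : ℝ := ((n:ℝ)+1) ^ (p'+1) * (c₀⁻¹) ^ p' with hKAdef
  have hKA0 : 0 ≤ KA := by
    apply mul_nonneg (Real.rpow_nonneg (by positivity) _) (Real.rpow_nonneg (by positivity) _)
  -- inner estimates
  have hcoreIn := fun x => core hp' hc₀ hC₀ hZm hI hMV (W x)
  have hcoreOut := core hp0 hc₀ hC₀ hWm hI hMU MV
  have hFx : ∀ x, F x = κ * ∫ y in I, opNorm (Z y * W x) ^ p' := fun x => havg _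
  have hF0 : ∀ x, 0 ≤ F x := fun x => by
    rw [hFx]
    exact mul_nonneg hκ (setIntegral_nonneg hQm fun y _ => Real.rpow_nonneg (opNorm_nonneg _) _)
  -- pointwise comparisons of F^(p-1) with opNorm (MV * W x) ^ p
  have hG1 : ∀ x, opNorm (MV * W x) ^ p ≤ C₀ ^ p * F x ^ (p-1) := by
    intro x
    have h1 := (hcoreIn x).2.2
    calc opNorm (MV * W x) ^ p = (opNorm (MV * W x) ^ p') ^ (p-1) := by
          rw [← Real.rpow_mul (opNorm_nonneg _), hp'p]
      _ ≤ (C₀ ^ p' * F x) ^ (p-1) :=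
          Real.rpow_le_rpow (Real.rpow_nonneg (opNorm_nonneg _) _) h1 hp1.le
      _ = (C₀ ^ p') ^ (p-1) * F x ^ (p-1) :=
          Real.mul_rpow (Real.rpow_nonneg hC₀.le _) (hF0 x)
      _ = C₀ ^ p * F x ^ (p-1) := by
          rw [← Real.rpow_mul hC₀.le, hp'p]
  have hG2 : ∀ x, F x ^ (p-1) ≤ KA ^ (p-1) * opNorm (MV * W x) ^ p := by
    intro x
    have h1 := (hcoreIn x).2.1
    calc F x ^ (p-1) ≤ (KA * opNorm (MV * W x) ^ p') ^ (p-1) :=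
          Real.rpow_le_rpow (hF0 x) h1 hp1.le
      _ = KA ^ (p-1) * (opNorm (MV * W x) ^ p') ^ (p-1) :=
          Real.mul_rpow hKA0 (Real.rpow_nonneg (opNorm_nonneg _) _)
      _ = KA ^ (p-1) * opNorm (MV * W x) ^ p := by
          rw [← Real.rpow_mul (opNorm_nonneg _), hp'p]
  -- a.e. swap
  have hswap : ∀ᵐ x ∂(volume.restrict I),
      opNorm (MV * W x) = opNorm (W x * MV) := by
    refine ae_restrict_of_ae (hWpd.mono fun x hx => ?_)
    exact opNorm_swap hMV.1.1 hx.1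
  have hswapP : ∀ᵐ x ∂(volume.restrict I),
      opNorm (MV * W x) ^ p = opNorm (W x * MV) ^ p :=
    hswap.mono fun x hx => by rw [hx]
  -- integrability of x ↦ opNorm (MV * W x) ^ p on I
  have hOpInt : IntegrableOn (fun x => opNorm (MV * W x) ^ p) I :=
    hcoreOut.1.congr (hswapP.mono fun x hx => hx.symm)
  -- measurability of F
  have mF : Measurable F := by
    have hVm : ∀ i j, Measurable fun q : (Fin d → ℝ) × (Fin d → ℝ) => (Z q.2 * W q.1) i j := by
      intro i j
      simp only [Matrix.mul_apply]
      exact Finset.measurable_sum _ fun k _ =>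
        ((hZm i k).comp measurable_snd).mul ((hWm k j).comp measurable_fst)
    have hj : Measurable fun q : (Fin d → ℝ) × (Fin d → ℝ) => opNorm (Z q.2 * W q.1) ^ p' :=
      measurable_comp hVm ((Real.continuous_rpow_const hp'.le).comp continuous_opNorm)
    have hInnerM : StronglyMeasurable fun x => ∫ y, opNorm (Z y * W x) ^ p' ∂(volume.restrict I) :=
      hj.stronglyMeasurable.integral_prod_right'
    have : F = fun x => κ * ∫ y in I, opNorm (Z y * W x) ^ p' := funext hFx
    rw [this]
    exact (hInnerM.measurable).const_mul κ
  have mG : Measurable fun x => F x ^ (p-1) :=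
    (Real.continuous_rpow_const hp1.le).measurable.comp mF
  have hGint : IntegrableOn (fun x => F x ^ (p-1)) I := by
    refine (hOpInt.const_mul (KA ^ (p-1))).mono' mG.aestronglyMeasurable (ae_of_all _ fun x => ?_)
    rw [Real.norm_eq_abs, abs_of_nonneg (Real.rpow_nonneg (hF0 x) _)]
    exact hG2 x
  constructor
  · -- lower bound direction
    have h1 := hcoreOut.2.2
    have h2 : ⨍ x in I, opNorm (W x * MV) ^ p ≤ C₀ ^ p * ⨍ x in I, F x ^ (p-1) := by
      rw [havg, havg]
      have hmono : ∫ x in I, opNorm (W x * MV) ^ p ≤ ∫ x in I, C₀ ^ p * F x ^ (p-1) := by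
        refine integral_mono_ae hcoreOut.1 (hGint.const_mul _) ?_
        refine hswapP.mono fun x hx => ?_
        show opNorm (W x * MV) ^ p ≤ C₀ ^ p * F x ^ (p - 1)
        rw [← hx]
        exact hG1 x
      calc κ * ∫ x in I, opNorm (W x * MV) ^ p ≤ κ * ∫ x in I, C₀ ^ p * F x ^ (p-1) :=
            mul_le_mul_of_nonneg_left hmono hκ
        _ = C₀ ^ p * (κ * ∫ x in I, F x ^ (p-1)) := by rw [integral_const_mul]; ring
    calc opNorm (MU * MV) ^ p ≤ C₀ ^ p * ⨍ x in I, opNorm (W x * MV) ^ p := h1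
      _ ≤ C₀ ^ p * (C₀ ^ p * ⨍ x in I, F x ^ (p-1)) :=
          mul_le_mul_of_nonneg_left h2 (Real.rpow_nonneg hC₀.le _)
      _ = (C₀ ^ p * C₀ ^ p) * ⨍ x in I, F x ^ (p-1) := by ring
  · -- upper bound direction
    have h2 : ⨍ x in I, F x ^ (p-1) ≤ KA ^ (p-1) * ⨍ x in I, opNorm (W x * MV) ^ p := by
      rw [havg, havg]
      have hmono : ∫ x in I, F x ^ (p-1) ≤ ∫ x in I, KA ^ (p-1) * opNorm (W x * MV) ^ p := by
        refine integral_mono_ae hGint (hcoreOut.1.const_mul _) ?_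
        refine hswapP.mono fun x hx => ?_
        show F x ^ (p - 1) ≤ KA ^ (p - 1) * opNorm (W x * MV) ^ p
        rw [← hx]
        exact hG2 x
      calc κ * ∫ x in I, F x ^ (p-1) ≤ κ * ∫ x in I, KA ^ (p-1) * opNorm (W x * MV) ^ p :=
            mul_le_mul_of_nonneg_left hmono hκ
        _ = KA ^ (p-1) * (κ * ∫ x in I, opNorm (W x * MV) ^ p) := by rw [integral_const_mul]; ring
    have h3 := hcoreOut.2.1
    calc ⨍ x in I, F x ^ (p-1) ≤ KA ^ (p-1) * ⨍ x in I, opNorm (W x * MV) ^ p := h2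
      _ ≤ KA ^ (p-1) * ((((n:ℝ)+1) ^ (p+1) * (c₀⁻¹) ^ p) * opNorm (MU * MV) ^ p) :=
          mul_le_mul_of_nonneg_left h3 (Real.rpow_nonneg hKA0 _)
      _ = (KA ^ (p-1) * (((n:ℝ)+1) ^ (p+1) * (c₀⁻¹) ^ p)) * opNorm (MU * MV) ^ p := by ring

end Aux

/-- `[U,V]_{A_p} ≈ sup_I ‖𝒰_I 𝒱'_I‖^p`, with `W = U^{1/p}` and `Z = V^{-1/p}`. -/
theorem stmt3 (n : ℕ) (p : ℝ) (hp : 1 < p) (c₀ C₀ : ℝ) (hc₀ : 0 < c₀) (hC₀ : 0 < C₀) :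
    ∃ c C : ℝ, 0 < c ∧ 0 < C ∧
    ∀ (d : ℕ) (W Z : (Fin d → ℝ) → Matrix (Fin n) (Fin n) ℂ),
      IsMatrixWeight W → IsMatrixWeight Z →
    ∀ MU MV : {Q : Set (Fin d → ℝ) // IsCube d Q} → Matrix (Fin n) (Fin n) ℂ,
      (∀ I, IsReducingFor p W I.1 (MU I) c₀ C₀) →
      (∀ I, IsReducingFor (p / (p - 1)) Z I.1 (MV I) c₀ C₀) →
      ENNReal.ofReal c * (⨆ I, ENNReal.ofReal (opNorm (MU I * MV I) ^ p)) ≤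
          ApChar d n p W Z ∧
      ApChar d n p W Z ≤
          ENNReal.ofReal C * ⨆ I, ENNReal.ofReal (opNorm (MU I * MV I) ^ p) := by
  have hp1 : (0:ℝ) < p - 1 := by linarith
  have hp0 : (0:ℝ) < p := by linarith
  set K : ℝ := C₀ ^ p * C₀ ^ p with hK
  have hKpos : 0 < K := mul_pos (Real.rpow_pos_of_pos hC₀ _) (Real.rpow_pos_of_pos hC₀ _)
  set CC : ℝ := (((n:ℝ)+1) ^ (p/(p-1)+1) * (c₀⁻¹) ^ (p/(p-1))) ^ (p-1) *
      (((n:ℝ)+1) ^ (p+1) * (c₀⁻¹) ^ p) with hCC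
  have hCpos : 0 < CC := by
    have h1 : (0:ℝ) < (n:ℝ)+1 := by positivity
    have h2 : (0:ℝ) < c₀⁻¹ := by positivity
    exact mul_pos
      (Real.rpow_pos_of_pos
        (mul_pos (Real.rpow_pos_of_pos h1 _) (Real.rpow_pos_of_pos h2 _)) _)
      (mul_pos (Real.rpow_pos_of_pos h1 _) (Real.rpow_pos_of_pos h2 _))
  refine ⟨K⁻¹, CC, inv_pos.2 hKpos, hCpos, ?_⟩
  intro d W Z hW hZ MU MV hMU hMV
  have key := fun I : {Q : Set (Fin d → ℝ) // IsCube d Q} =>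
    percube hp hc₀ hC₀ hW.1 hZ.1 hW.2 I.2 (hMU I) (hMV I)
  have hAp : ApChar d n p W Z = ⨆ I : {Q : Set (Fin d → ℝ) // IsCube d Q},
      ENNReal.ofReal (⨍ x in I.1, (⨍ y in I.1, opNorm (Z y * W x) ^ (p / (p - 1))) ^ (p - 1)) :=
    rfl
  constructor
  · rw [hAp, ENNReal.mul_iSup]
    refine iSup_le fun I => ?_
    have h1 := (key I).1
    have h2 : K⁻¹ * opNorm (MU I * MV I) ^ p ≤
        ⨍ x in I.1, (⨍ y in I.1, opNorm (Z y * W x) ^ (p/(p-1))) ^ (p-1) := by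
      have h3 := mul_le_mul_of_nonneg_left h1 (inv_nonneg.2 hKpos.le)
      rwa [← mul_assoc, inv_mul_cancel₀ hKpos.ne', one_mul] at h3
    calc ENNReal.ofReal K⁻¹ * ENNReal.ofReal (opNorm (MU I * MV I) ^ p)
        = ENNReal.ofReal (K⁻¹ * opNorm (MU I * MV I) ^ p) :=
          (ENNReal.ofReal_mul (by positivity)).symm
      _ ≤ ENNReal.ofReal
            (⨍ x in I.1, (⨍ y in I.1, opNorm (Z y * W x) ^ (p/(p-1))) ^ (p-1)) :=
          ENNReal.ofReal_le_ofReal h2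
      _ ≤ _ := le_iSup_of_le I (le_refl _)
  · rw [hAp]
    refine iSup_le fun I => ?_
    have h1 := (key I).2
    calc ENNReal.ofReal
          (⨍ x in I.1, (⨍ y in I.1, opNorm (Z y * W x) ^ (p/(p-1))) ^ (p-1))
        ≤ ENNReal.ofReal (CC * opNorm (MU I * MV I) ^ p) := ENNReal.ofReal_le_ofReal h1
      _ = ENNReal.ofReal CC * ENNReal.ofReal (opNorm (MU I * MV I) ^ p) :=
          ENNReal.ofReal_mul hCpos.le
      _ ≤ ENNReal.ofReal CC *
          ⨆ I' : {Q : Set (Fin d → ℝ) // IsCube d Q},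
            ENNReal.ofReal (opNorm (MU I' * MV I') ^ p) :=
          mul_le_mul_right (le_iSup (fun I' => ENNReal.ofReal (opNorm (MU I' * MV I') ^ p)) I) _


end Paper
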